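/- arXiv:1605.01473 — 3 statements merged into one kernel-verified Lean document; each statement's English description precedes it below -/
import Mathlib

section
/- Let m, d, k be natural numbers and let U₀, U₁, …, U_k be subspaces of ℂ^m such that dim(U_i) = d for every 0 ≤ i ≤ k and dim(U_i ⊓ U_{i+1}) + m ≥ 3d for every 0 ≤ i < k. Then dim(U₀ ⊓ U_k) + k·m ≥ (2k+1)·d. -/
/-!
Grassmann's formula applied to `A ⊓ B` and `B ⊓ C`, whose sum lies in `B` and whose intersection
lies in `A ⊓ C`, gives `dim (A ⊓ B) + dim (B ⊓ C) ≤ dim (A ⊓ C) + dim B`. Walking along the chain,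
each step from `U₀ ⊓ Uᵢ` to `U₀ ⊓ Uᵢ₊₁` therefore loses at most `d - dim (Uᵢ ⊓ Uᵢ₊₁) ≤ m - 2d`,
and induction on `k` gives the bound.
-/

open Module

section

variable {K V : Type*} [DivisionRing K] [AddCommGroup V] [Module K V] [FiniteDimensional K V]

theorem Submodule.finrank_inf_add_finrank_inf_le (A B C : Submodule K V) :
    finrank K ↥(A ⊓ B) + finrank K ↥(B ⊓ C) ≤ finrank K ↥(A ⊓ C) + finrank K ↥B := by
  have hsup : finrank K ↥((A ⊓ B) ⊔ (B ⊓ C)) ≤ finrank K ↥B :=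
    Submodule.finrank_mono (sup_le inf_le_right inf_le_left)
  have hinf : finrank K ↥((A ⊓ B) ⊓ (B ⊓ C)) ≤ finrank K ↥(A ⊓ C) :=
    Submodule.finrank_mono (le_inf (inf_le_left.trans inf_le_left)
      (inf_le_right.trans inf_le_right))
  have := Submodule.finrank_sup_add_finrank_inf_eq (A ⊓ B) (B ⊓ C)
  omega

theorem Submodule.finrank_inf_chain {d : ℕ} (k : ℕ) (U : Fin (k + 1) → Submodule K V)
    (hdim : ∀ i, finrank K ↥(U i) = d)
    (hcons : ∀ i : Fin k, 3 * d ≤ finrank K ↥(U i.castSucc ⊓ U i.succ) + finrank K V) :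
    (2 * k + 1) * d ≤ finrank K ↥(U 0 ⊓ U (Fin.last k)) + k * finrank K V := by
  induction k with
  | zero => rw [show Fin.last 0 = 0 from rfl, inf_idem, hdim]; omega
  | succ k ih =>
    have hprefix := ih (fun i => U i.castSucc) (fun i => hdim _)
      (fun i => by simpa only [Fin.succ_castSucc] using hcons i.castSucc)
    have hlast := hcons (Fin.last k)
    have hstep := finrank_inf_add_finrank_inf_le (U (Fin.castSucc 0)) (U (Fin.last k).castSucc)
      (U (Fin.last k).succ)
    rw [hdim] at hstep
    -- `0 : Fin (k + 2)` is `Fin.castSucc 0` only up to defeq; `linarith` needs matching atoms.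
    show _ ≤ finrank K ↥(U (Fin.castSucc 0) ⊓ U (Fin.last k).succ) + _
    linarith
end

theorem stmt3 (m d k : ℕ) (U : Fin (k + 1) → Submodule ℂ (Fin m → ℂ))
    (hdim : ∀ i, finrank ℂ ↥(U i) = d)
    (hcons : ∀ i : Fin k, finrank ℂ ↥(U i.castSucc ⊓ U i.succ) + m ≥ 3 * d) :
    finrank ℂ ↥(U 0 ⊓ U (Fin.last k)) + k * m ≥ (2 * k + 1) * d := by
  have hm : finrank ℂ (Fin m → ℂ) = m := by simp
  have hchain := Submodule.finrank_inf_chain k U hdim (by simpa only [hm] using hcons)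
  rwa [hm] at hchain
end

section
/- Let m, d be natural numbers, let Δ ≥ 1 be a natural number, and let U₀, U₁, …, U_Δ and Z be subspaces of ℂ^m, each of dimension d. Assume (i) dim(U_i ⊓ U_{i+1}) + m ≥ 3d for every 0 ≤ i < Δ, and (ii) dim(U_Δ ⊓ Z) + m ≥ dim(U₀ ⊓ U_Δ ⊓ Z) + 3d. Then (2Δ+3)·d ≤ (Δ+1)·m. -/
/-!
Two subspaces `A ⊓ B` and `B ⊓ C` of `B` meet in `A ⊓ B ⊓ C`, so
`dim (A ⊓ B) + dim (B ⊓ C) ≤ dim B + dim (A ⊓ B ⊓ C)`. Applied with `A = U₀` along the chain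
`U₀, …, U_Δ`, each step loses at most `m - 2d` dimensions of `U₀ ⊓ Uᵢ`, giving
`(2Δ + 1) d ≤ dim (U₀ ⊓ U_Δ) + Δ m`. Applied once more with `A = U₀`, `B = U_Δ`, `C = Z`,
it turns hypothesis (ii) into `dim (U₀ ⊓ U_Δ) + 2d ≤ m`, the triple intersection cancelling.
-/

open Module

namespace Submodule

variable {K V : Type*} [Field K] [AddCommGroup V] [Module K V] [FiniteDimensional K V]

theorem finrank_inf_add_finrank_inf_le_s4 (A B C : Submodule K V) :
    finrank K ↥(A ⊓ B) + finrank K ↥(B ⊓ C) ≤ finrank K ↥B + finrank K ↥(A ⊓ B ⊓ C) := by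
  have hsup : finrank K ↥(A ⊓ B ⊔ B ⊓ C) ≤ finrank K ↥B :=
    finrank_mono (sup_le inf_le_right inf_le_left)
  have hinf : A ⊓ B ⊓ (B ⊓ C) = A ⊓ B ⊓ C := by
    rw [inf_assoc, ← inf_assoc B, inf_idem, inf_assoc]
  have := finrank_sup_add_finrank_inf_eq (A ⊓ B) (B ⊓ C)
  rw [hinf] at this
  omega

theorem le_finrank_zero_inf_add_mul_of_chain {n d m : ℕ} (U : Fin (n + 1) → Submodule K V)
    (hdimU : ∀ i, finrank K ↥(U i) = d)
    (hcons : ∀ i : Fin n, finrank K ↥(U i.castSucc ⊓ U i.succ) + m ≥ 3 * d) (i : Fin (n + 1)) :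
    (2 * i + 1) * d ≤ finrank K ↥(U 0 ⊓ U i) + i * m := by
  induction i using Fin.induction with
  | zero => rw [inf_idem, hdimU]; simp
  | succ i ih =>
    have hstep := finrank_inf_add_finrank_inf_le_s4 (U 0) (U i.castSucc) (U i.succ)
    have hmono : finrank K ↥(U 0 ⊓ U i.castSucc ⊓ U i.succ) ≤ finrank K ↥(U 0 ⊓ U i.succ) :=
      finrank_mono (inf_le_inf_right _ inf_le_left)
    rw [Fin.val_castSucc] at ih
    rw [Fin.val_succ]
    have := hcons i
    have := hdimU i.castSucc
    linarith

end Submodule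

theorem stmt4_general (m d Δ : ℕ)
    (U : Fin (Δ + 1) → Submodule ℂ (Fin m → ℂ)) (Z : Submodule ℂ (Fin m → ℂ))
    (hdimU : ∀ i, finrank ℂ ↥(U i) = d)
    (hcons : ∀ i : Fin Δ, finrank ℂ ↥(U i.castSucc ⊓ U i.succ) + m ≥ 3 * d)
    (hZ : finrank ℂ ↥(U (Fin.last Δ) ⊓ Z) + m ≥
      finrank ℂ ↥(U 0 ⊓ U (Fin.last Δ) ⊓ Z) + 3 * d) :
    (2 * Δ + 3) * d ≤ (Δ + 1) * m := by
  have hchain := Submodule.le_finrank_zero_inf_add_mul_of_chain U hdimU hcons (Fin.last Δ)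
  have hlast := Submodule.finrank_inf_add_finrank_inf_le_s4 (U 0) (U (Fin.last Δ)) Z
  rw [Fin.val_last] at hchain
  have := hdimU (Fin.last Δ)
  linarith

theorem stmt4 (m d Δ : ℕ) (hΔ : 1 ≤ Δ)
    (U : Fin (Δ + 1) → Submodule ℂ (Fin m → ℂ)) (Z : Submodule ℂ (Fin m → ℂ))
    (hdimU : ∀ i, finrank ℂ ↥(U i) = d) (hdimZ : finrank ℂ ↥Z = d)
    (hcons : ∀ i : Fin Δ, finrank ℂ ↥(U i.castSucc ⊓ U i.succ) + m ≥ 3 * d)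
    (hZ : finrank ℂ ↥(U (Fin.last Δ) ⊓ Z) + m ≥
      finrank ℂ ↥(U 0 ⊓ U (Fin.last Δ) ⊓ Z) + 3 * d) :
    (2 * Δ + 3) * d ≤ (Δ + 1) * m :=
  stmt4_general m d Δ U Z hdimU hcons hZ
end

section
/- Let m, n, p be positive integers with n < m, let l : Fin m → Fin p be a map, let v ∈ ℂ^m, and let V be an m×n complex matrix. For a ∈ ℂ^p, let D_a denote the m×m diagonal matrix whose t-th diagonal entry is a(l(t)). If v does not lie in the column span of V, then the set {(a, b) ∈ ℂ^p × ℂ^p : D_a v lies in the column span of D_b V} has Lebesgue measure zero in ℂ^p × ℂ^p. -/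
open Matrix MeasureTheory

/-- The column span of an `m × n` complex matrix: the range of `x ↦ M x`. -/
noncomputable def colSpan {m n : ℕ} (M : Matrix (Fin m) (Fin n) ℂ) :
    Submodule ℂ (Fin m → ℂ) :=
  LinearMap.range M.mulVecLin

/-- The `m × m` diagonal matrix whose `t`-th diagonal entry is `a (l t)`. -/
def patDiag {m p : ℕ} (l : Fin m → Fin p) (a : Fin p → ℂ) :
    Matrix (Fin m) (Fin m) ℂ :=
  Matrix.diagonal (a ∘ l)

/-!
For fixed `b` with nonzero entries, `a ↦ D_a v = diag(v) (a ∘ l)` is linear, so the `a`-slice of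
the bad set is the preimage of the subspace `span (D_b V)`. It is a proper subspace since it misses
`a = b`: `D_b` is invertible and `v ∉ span V`. Hence almost every slice is null, and Fubini applies
because the bad set, a projection of the closed set `{(a, b, x) | D_a v = D_b V x}`, is σ-compact.
-/

theorem IsSigmaCompact.measurableSet {X : Type*} [TopologicalSpace X] [T2Space X]
    [MeasurableSpace X] [BorelSpace X] {s : Set X} (hs : IsSigmaCompact s) : MeasurableSet s := by
  obtain ⟨K, hK, rfl⟩ := hs
  exact .iUnion fun n => (hK n).isClosed.measurableSet

theorem addHaar_preimage_submodule_eq_zero {E F : Type*} [NormedAddCommGroup E]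
    [NormedSpace ℂ E] [MeasurableSpace E] [BorelSpace E] [FiniteDimensional ℂ E]
    [AddCommGroup F] [Module ℂ F] (μ : Measure E) [μ.IsAddHaarMeasure] (f : E →ₗ[ℂ] F)
    (U : Submodule ℂ F) {x₀ : E} (hx₀ : f x₀ ∉ U) : μ (f ⁻¹' U) = 0 :=
  Measure.addHaar_submodule μ ((U.comap f).restrictScalars ℝ) fun h => hx₀ <| by
    simpa using (Submodule.eq_top_iff'.mp h) x₀

theorem measurableSet_setOf_mem_colSpan {X : Type*} [TopologicalSpace X] [SigmaCompactSpace X]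
    [T2Space X] [MeasurableSpace X] [BorelSpace X] {m n : ℕ} {f : X → Fin m → ℂ}
    {M : X → Matrix (Fin m) (Fin n) ℂ} (hf : Continuous f) (hM : Continuous M) :
    MeasurableSet {x | f x ∈ colSpan (M x)} := by
  have hclosed : IsClosed {z : X × (Fin n → ℂ) | M z.1 *ᵥ z.2 = f z.1} :=
    isClosed_eq ((hM.comp continuous_fst).matrix_mulVec continuous_snd) (hf.comp continuous_fst)
  have himage : Prod.fst '' {z : X × (Fin n → ℂ) | M z.1 *ᵥ z.2 = f z.1} =
      {x | f x ∈ colSpan (M x)} := by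
    ext x
    simp [colSpan]
  rw [← himage]
  exact ((isSigmaCompact_univ.of_isClosed_subset hclosed (Set.subset_univ _)).image
    continuous_fst).measurableSet

theorem mem_colSpan_of_mulVec_mem_colSpan_mul {m n : ℕ} {A : Matrix (Fin m) (Fin m) ℂ}
    (hA : IsUnit A) {v : Fin m → ℂ} {V : Matrix (Fin m) (Fin n) ℂ}
    (h : A *ᵥ v ∈ colSpan (A * V)) : v ∈ colSpan V := by
  obtain ⟨x, hx⟩ := h
  refine ⟨x, ?_⟩
  have hA' : A⁻¹ * A = 1 := Matrix.nonsing_inv_mul A ((Matrix.isUnit_iff_isUnit_det A).mp hA)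
  simp only [Matrix.mulVecLin_apply] at hx ⊢
  calc V *ᵥ x = (A⁻¹ * A) *ᵥ (V *ᵥ x) := by rw [hA', one_mulVec]
    _ = A⁻¹ *ᵥ ((A * V) *ᵥ x) := by simp only [mulVec_mulVec, Matrix.mul_assoc]
    _ = v := by rw [hx, mulVec_mulVec, hA', one_mulVec]

section patDiag

variable {m p : ℕ} (l : Fin m → Fin p)

theorem patDiag_mulVec (a : Fin p → ℂ) (v : Fin m → ℂ) :
    patDiag l a *ᵥ v = diagonal v *ᵥ (a ∘ l) := by
  ext t
  simp [patDiag, mulVec_diagonal, mul_comm]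

theorem isUnit_patDiag {a : Fin p → ℂ} (ha : ∀ i, a i ≠ 0) : IsUnit (patDiag l a) :=
  isUnit_diagonal.mpr (Pi.isUnit_iff.mpr fun t => (ha (l t)).isUnit)

theorem volume_setOf_patDiag_mulVec_mem_colSpan {n : ℕ} {v : Fin m → ℂ}
    {V : Matrix (Fin m) (Fin n) ℂ} (hv : v ∉ colSpan V) {b : Fin p → ℂ} (hb : ∀ i, b i ≠ 0) :
    volume {a : Fin p → ℂ | patDiag l a *ᵥ v ∈ colSpan (patDiag l b * V)} = 0 := by
  have hb_notMem : patDiag l b *ᵥ v ∉ colSpan (patDiag l b * V) :=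
    fun h => hv (mem_colSpan_of_mulVec_mem_colSpan_mul (isUnit_patDiag l hb) h)
  simp_rw [patDiag_mulVec] at hb_notMem ⊢
  exact addHaar_preimage_submodule_eq_zero volume
    ((diagonal v).mulVecLin ∘ₗ LinearMap.funLeft ℂ ℂ l) _ hb_notMem

end patDiag

theorem stmt5_general (m n p : ℕ)
    (l : Fin m → Fin p) (v : Fin m → ℂ) (V : Matrix (Fin m) (Fin n) ℂ)
    (hv : v ∉ colSpan V) :
    volume {ab : (Fin p → ℂ) × (Fin p → ℂ) |
      (patDiag l ab.1).mulVec v ∈ colSpan (patDiag l ab.2 * V)} = 0 := by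
  have hgeneric : ∀ᵐ b : Fin p → ℂ, ∀ i, b i ≠ 0 :=
    ae_all_iff.mpr fun i => by simpa only [volume_pi] using Measure.ae_eval_ne _ i 0
  rw [Measure.volume_eq_prod, Measure.prod_apply_symm <| measurableSet_setOf_mem_colSpan
    (by unfold patDiag; fun_prop) (by unfold patDiag; fun_prop)]
  refine (lintegral_congr_ae ?_).trans lintegral_zero
  filter_upwards [hgeneric] with b hb
  exact volume_setOf_patDiag_mulVec_mem_colSpan l hv hb

theorem stmt5 (m n p : ℕ) (hm : 0 < m) (hn : 0 < n) (hp : 0 < p) (hnm : n < m)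
    (l : Fin m → Fin p) (v : Fin m → ℂ) (V : Matrix (Fin m) (Fin n) ℂ)
    (hv : v ∉ colSpan V) :
    volume {ab : (Fin p → ℂ) × (Fin p → ℂ) |
      (patDiag l ab.1).mulVec v ∈ colSpan (patDiag l ab.2 * V)} = 0 :=
  stmt5_general m n p l v V hv
end
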